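/- Fix 1 ≤ i < j ≤ n and let Δ_{ij} = { x ∈ K^n : x_i = x_j, and for all pairs s<t the points x_s, x_t, σ(x_s), σ(x_t) coincide only when (s,t)=(i,j), i.e. x ∈ K^n_{*μ} }. If an element t ∈ H has a fixed point on Δ_{ij}, then t = (i j) (the transposition) or t = id. -/

import Mathlib

/-- The permutation action of `s : Perm (Fin n)` on `Fin n → K` (permuting the factors). -/
def permAct (K : Type*) {n : ℕ} (s : Equiv.Perm (Fin n)) : Equiv.Perm (Fin n → K) :=
  Equiv.arrowCongr s (Equiv.refl K)

/-- The involution `σ_A` of `K^n` applying `σ` to the coordinates in `A`. -/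
def sigmaOn {K : Type*} (σ : Equiv.Perm K) {n : ℕ} (A : Finset (Fin n)) :
    Equiv.Perm (Fin n → K) :=
  Equiv.piCongrRight fun i => if i ∈ A then σ else Equiv.refl K

/-- The covering transformation group `G`, generated by `S_n` and all the `σ_A`. -/
def bigG {K : Type*} (σ : Equiv.Perm K) (n : ℕ) : Subgroup (Equiv.Perm (Fin n → K)) :=
  Subgroup.closure (Set.range (permAct K (n := n)) ∪ Set.range (sigmaOn σ (n := n)))

/-- The subgroup `H ≤ G`, generated by `S_n` and the `σ_{ij}` applying `σ` to exactly two
coordinates. -/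
def bigH {K : Type*} (σ : Equiv.Perm K) (n : ℕ) : Subgroup (Equiv.Perm (Fin n → K)) :=
  Subgroup.closure (Set.range (permAct K (n := n)) ∪
    {g | ∃ A : Finset (Fin n), A.card = 2 ∧ g = sigmaOn σ A})

/-!
Every element of `H` has the normal form `σ_A ∘ π_s` (a permutation of the factors followed by
applying `σ` on a set `A` of coordinates): the `σ_A` form a group because `σ` is an involution,
and `S_n` normalizes it. At a point `x ∈ Δ_{ij}` no `σ (x l)` equals any `x k`, so a normal form
fixing `x` has `A = ∅`; then `s` preserves the fibres of `x`, which are singletons apart from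
`{i, j}`, so `s` is `1` or `(i j)`.
-/

open Equiv Finset

section NormalForm

variable {K : Type*} {n : ℕ}

lemma permAct_apply (s : Perm (Fin n)) (x : Fin n → K) : permAct K s x = x ∘ s.symm := rfl

lemma permAct_one : permAct K (1 : Perm (Fin n)) = 1 := rfl

lemma permAct_mul (s u : Perm (Fin n)) : permAct K (s * u) = permAct K s * permAct K u := rfl

lemma permAct_inv (s : Perm (Fin n)) : permAct K s⁻¹ = (permAct K s)⁻¹ := rfl

lemma sigmaOn_apply (σ : Perm K) (A : Finset (Fin n)) (x : Fin n → K) (k : Fin n) :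
    sigmaOn σ A x k = if k ∈ A then σ (x k) else x k := by
  by_cases hk : k ∈ A <;> simp [sigmaOn, hk]

lemma sigmaOn_empty (σ : Perm K) : sigmaOn σ (∅ : Finset (Fin n)) = 1 := by
  ext x k
  simp [sigmaOn_apply]

lemma sigmaOn_mul {σ : Perm K} (hσ : Function.Involutive σ) (A B : Finset (Fin n)) :
    sigmaOn σ A * sigmaOn σ B = sigmaOn σ (symmDiff A B) := by
  ext x k
  by_cases hA : k ∈ A <;> by_cases hB : k ∈ B <;>
    simp [sigmaOn_apply, Finset.mem_symmDiff, hA, hB, hσ (x k)]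

lemma sigmaOn_inv {σ : Perm K} (hσ : Function.Involutive σ) (A : Finset (Fin n)) :
    (sigmaOn σ A)⁻¹ = sigmaOn σ A :=
  inv_eq_of_mul_eq_one_left <| by rw [sigmaOn_mul hσ, symmDiff_self]; exact sigmaOn_empty σ

lemma permAct_mul_sigmaOn (σ : Perm K) (s : Perm (Fin n)) (A : Finset (Fin n)) :
    permAct K s * sigmaOn σ A = sigmaOn σ (A.map s.toEmbedding) * permAct K s := by
  ext x k
  simp [permAct_apply, sigmaOn_apply, Finset.mem_map_equiv]

theorem exists_eq_sigmaOn_mul_permAct_of_mem_bigH {σ : Perm K} (hσ : Function.Involutive σ)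
    {t : Perm (Fin n → K)} (ht : t ∈ bigH σ n) :
    ∃ (A : Finset (Fin n)) (s : Perm (Fin n)), t = sigmaOn σ A * permAct K s := by
  induction ht using Subgroup.closure_induction with
  | mem g hg =>
    rcases hg with ⟨s, rfl⟩ | ⟨A, -, rfl⟩
    · exact ⟨∅, s, by rw [sigmaOn_empty, one_mul]⟩
    · exact ⟨A, 1, by rw [permAct_one, mul_one]⟩
  | one => exact ⟨∅, 1, by rw [sigmaOn_empty, permAct_one, one_mul]⟩
  | mul g h _ _ ihg ihh =>
    obtain ⟨A, s, rfl⟩ := ihg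
    obtain ⟨B, u, rfl⟩ := ihh
    refine ⟨symmDiff A (B.map s.toEmbedding), s * u, ?_⟩
    rw [permAct_mul, ← sigmaOn_mul hσ, mul_assoc, ← mul_assoc (permAct K s),
      permAct_mul_sigmaOn, mul_assoc, mul_assoc]
  | inv g _ ih =>
    obtain ⟨A, s, rfl⟩ := ih
    refine ⟨A.map s⁻¹.toEmbedding, s⁻¹, ?_⟩
    rw [mul_inv_rev, sigmaOn_inv hσ, ← permAct_inv, permAct_mul_sigmaOn]

end NormalForm

lemma Equiv.Perm.eq_one_or_eq_swap_of_forall {α : Type*} [DecidableEq α] {i j : α}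
    {p : Perm α} (h : ∀ k, p k = k ∨ p k = swap i j k) : p = 1 ∨ p = swap i j := by
  by_cases hi : p i = i
  · left
    ext k
    rcases h k with hk | hk
    · exact hk
    by_cases hki : k = i
    · rw [hki, hi]; rfl
    by_cases hkj : k = j
    · subst hkj
      rw [swap_apply_right, ← hi] at hk
      exact absurd (p.injective hk) hki
    · rw [hk, swap_apply_of_ne_of_ne hki hkj]; rfl
  · right
    have hpi : p i = j := by simpa [hi] using h i
    ext k
    rcases h k with hk | hk
    · have hki : k ≠ i := by rintro rfl; exact hi hk
      have hkj : k ≠ j := by rintro rfl; exact hi (hpi.trans (p.injective (hpi.trans hk.symm)).symm)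
      rw [hk, swap_apply_of_ne_of_ne hki hkj]
    · exact hk

section Delta

variable {K : Type*} {n : ℕ}

/-- The locus `Δ_{ij}` of the paper. -/
def deltaLocus (σ : Perm K) (i j : Fin n) : Set (Fin n → K) :=
  {x | x i = x j ∧ ∀ s t, s ≠ t → (x s = x t ∨ x s = σ (x t)) →
    (s = i ∧ t = j) ∨ (s = j ∧ t = i)}

variable {σ : Perm K} {i j : Fin n} {x : Fin n → K}

lemma eq_or_eq_swap_of_mem_deltaLocus (hx : x ∈ deltaLocus σ i j) {a b : Fin n}
    (hab : x a = x b) : b = a ∨ b = swap i j a := by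
  by_cases h : a = b
  · exact Or.inl h.symm
  rcases hx.2 a b h (Or.inl hab) with ⟨rfl, rfl⟩ | ⟨rfl, rfl⟩
  · exact Or.inr (swap_apply_left a b).symm
  · exact Or.inr (swap_apply_right b a).symm

lemma apply_ne_of_mem_deltaLocus (hσ : ∀ y, σ y ≠ y) (hx : x ∈ deltaLocus σ i j)
    (a b : Fin n) : σ (x b) ≠ x a := by
  intro h
  have hab : x a = x b := by
    by_cases hab : a = b
    · rw [hab]
    rcases hx.2 a b hab (Or.inr h.symm) with ⟨rfl, rfl⟩ | ⟨rfl, rfl⟩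
    exacts [hx.1, hx.1.symm]
  exact hσ _ (h.trans hab)

theorem eq_swap_or_eq_one_of_fixed_mem_deltaLocus (hσ : ∀ y, σ y ≠ y)
    (hx : x ∈ deltaLocus σ i j) {A : Finset (Fin n)} {s : Perm (Fin n)}
    (hfix : (sigmaOn σ A * permAct K s) x = x) : A = ∅ ∧ (s = 1 ∨ s = swap i j) := by
  have hk (k : Fin n) : (if k ∈ A then σ (x (s.symm k)) else x (s.symm k)) = x k := by
    simpa [sigmaOn_apply, permAct_apply] using congrFun hfix k
  have hA : A = ∅ := Finset.eq_empty_of_forall_notMem fun k hkA =>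
    apply_ne_of_mem_deltaLocus hσ hx k (s.symm k) (by simpa [hkA] using hk k)
  refine ⟨hA, Perm.eq_one_or_eq_swap_of_forall fun k => ?_⟩
  exact eq_or_eq_swap_of_mem_deltaLocus hx (by simpa [hA] using hk (s k))

end Delta

theorem stmt3_general {K : Type*} (σ : Equiv.Perm K)
    (hinv : ∀ x : K, σ (σ x) = x) (hfree : ∀ x : K, σ x ≠ x)
    (n : ℕ) (i j : Fin n) :
    ∀ t ∈ bigH σ n,
      (∃ x : Fin n → K,
        (x i = x j ∧
          ∀ s t' : Fin n, s ≠ t' → (x s = x t' ∨ x s = σ (x t')) →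
            (s = i ∧ t' = j) ∨ (s = j ∧ t' = i)) ∧
        t x = x) →
      t = permAct K (Equiv.swap i j) ∨ t = 1 := by
  rintro t ht ⟨x, hx : x ∈ deltaLocus σ i j, hfix⟩
  obtain ⟨A, s, rfl⟩ := exists_eq_sigmaOn_mul_permAct_of_mem_bigH hinv ht
  obtain ⟨rfl, rfl | rfl⟩ := eq_swap_or_eq_one_of_fixed_mem_deltaLocus hfree hx hfix
  · exact Or.inr (by rw [sigmaOn_empty, permAct_one, one_mul])
  · exact Or.inl (by rw [sigmaOn_empty, one_mul])

/-- if `t ∈ H` has a fixed point on the locus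
`Δ_{ij} = { x ∈ K^n_{*μ} : x i = x j }` (where, among the points `x_s, σ(x_s)`, the only
coincidence is `x_i = x_j`), then `t` is the transposition `(i j)` or the identity. -/
theorem stmt3 {K : Type*} (σ : Equiv.Perm K)
    (hinv : ∀ x : K, σ (σ x) = x) (hfree : ∀ x : K, σ x ≠ x)
    (n : ℕ) (hn : 2 ≤ n) (i j : Fin n) (hij : i < j) :
    ∀ t ∈ bigH σ n,
      (∃ x : Fin n → K,
        (x i = x j ∧
          ∀ s t' : Fin n, s ≠ t' → (x s = x t' ∨ x s = σ (x t')) →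
            (s = i ∧ t' = j) ∨ (s = j ∧ t' = i)) ∧
        t x = x) →
      t = permAct K (Equiv.swap i j) ∨ t = 1 :=
  stmt3_general σ hinv hfree n i j
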